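/- SL and BSL are equiexpressive: for every SL sentence φ there is a BSL sentence φ' (namely tr(φ)) such that for all CGS G, G ⊨_SL φ iff G ⊨_BSL φ'; and for every BSL sentence φ there is an SL sentence φ' (namely tr_Ag(φ)) such that for all CGS G, G ⊨_BSL φ iff G ⊨_SL φ'. -/

import Mathlib

/-!
`tr` is compositional: an SL temporal operator is evaluated on an outcome of the current
assignment, which is exactly what the path quantifier `E` inserted by `tr` does.

For `tr_A`, a BSL path quantifier ranges over all plays compatible with the bound agents, while
SL temporal operators are only meaningful under complete assignments. At each `E`, `tr_A`
quantifies fresh strategies `x_a` for the unbound agents `a ∈ A` and binds them. A play is an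
outcome of the BSL assignment iff the agents of `A` can be given strategies replaying it, and a
complete assignment has exactly one outcome, along which the SL temporal operators and the BSL
path operators agree.
-/

/-- A concurrent game structure: transition function, initial state, valuation. -/
structure CGS (S Ag Act AP : Type) where
  δ : S → (Ag → Act) → S
  init : S
  val : S → AP → Prop

variable {S Ag Act AP Var : Type}

/-- An initial (finite) path: a start state together with the list of decisions taken. -/
abbrev FPath (S Ag Act : Type) := S × List (Ag → Act)

/-- Last state of an initial path. -/
def CGS.lastState (G : CGS S Ag Act AP) (ρ : FPath S Ag Act) : S :=
  ρ.2.foldl G.δ ρ.1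

/-- A strategy assigns an action to every initial path. -/
abbrev Strat (S Ag Act : Type) := FPath S Ag Act → Act

/-- Concatenation of initial paths (meaningful when `G.lastState ρ = ρ'.1`,
i.e. they are glued at the shared state). -/
def FPath.concat (ρ ρ' : FPath S Ag Act) : FPath S Ag Act := (ρ.1, ρ.2 ++ ρ'.2)

/-- The finite prefix with `n` decisions of the play from `q` whose decision stream is `d`. -/
def prefixPath (q : S) (d : ℕ → Ag → Act) (n : ℕ) : FPath S Ag Act :=
  (q, List.ofFn fun i : Fin n => d i)

/-- The state reached after `i` steps of the play from `q` with decision stream `d`. -/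
def stateAt (G : CGS S Ag Act AP) (q : S) (d : ℕ → Ag → Act) (i : ℕ) : S :=
  G.lastState (prefixPath q d i)

/-- An assignment: a partial map from agents and variables to strategies. -/
abbrev Assign (S Ag Act Var : Type) := Ag ⊕ Var → Option (Strat S Ag Act)

/-- The outcome of an assignment from a state: the set of plays (identified with
their decision streams) compatible with all strategies assigned to agents. -/
def outcome (G : CGS S Ag Act AP) (q : S) (χ : Assign S Ag Act Var) :
    Set (ℕ → Ag → Act) :=
  {d | ∀ (k : ℕ) (a : Ag) (σ : Strat S Ag Act),
      χ (Sum.inl a) = some σ → d k a = σ (prefixPath q d k)}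

/-- The `ρ`-translation of a strategy. -/
def transStrat [DecidableEq S] (G : CGS S Ag Act AP) (ρ : FPath S Ag Act)
    (σ : Strat S Ag Act) : Strat S Ag Act :=
  fun ρ' => if ρ'.1 = G.lastState ρ then σ (ρ.concat ρ') else σ ρ'

/-- The `ρ`-translation of an assignment. -/
def transAssign [DecidableEq S] (G : CGS S Ag Act AP) (ρ : FPath S Ag Act)
    (χ : Assign S Ag Act Var) : Assign S Ag Act Var :=
  fun l => (χ l).map (transStrat G ρ)

/-- Syntax of Strategy Logic (SL). -/
inductive SLForm (AP Ag Var : Type) : Type where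
  | atom : AP → SLForm AP Ag Var
  | neg  : SLForm AP Ag Var → SLForm AP Ag Var
  | or   : SLForm AP Ag Var → SLForm AP Ag Var → SLForm AP Ag Var
  | next : SLForm AP Ag Var → SLForm AP Ag Var
  | untl : SLForm AP Ag Var → SLForm AP Ag Var → SLForm AP Ag Var
  | exi  : Var → SLForm AP Ag Var → SLForm AP Ag Var
  | bind : Ag → Var → SLForm AP Ag Var → SLForm AP Ag Var

mutual
/-- State formulas of Branching-time Strategy Logic (BSL). -/
inductive BSLForm (AP Ag Var : Type) : Type where
  | atom : AP → BSLForm AP Ag Var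
  | neg  : BSLForm AP Ag Var → BSLForm AP Ag Var
  | or   : BSLForm AP Ag Var → BSLForm AP Ag Var → BSLForm AP Ag Var
  | exi  : Var → BSLForm AP Ag Var → BSLForm AP Ag Var
  | bind : Ag → Var → BSLForm AP Ag Var → BSLForm AP Ag Var
  | unbind : Ag → BSLForm AP Ag Var → BSLForm AP Ag Var
  | pathE : BSLPath AP Ag Var → BSLForm AP Ag Var
/-- Path formulas of BSL. -/
inductive BSLPath (AP Ag Var : Type) : Type where
  | state : BSLForm AP Ag Var → BSLPath AP Ag Var
  | neg   : BSLPath AP Ag Var → BSLPath AP Ag Var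
  | or    : BSLPath AP Ag Var → BSLPath AP Ag Var → BSLPath AP Ag Var
  | next  : BSLPath AP Ag Var → BSLPath AP Ag Var
  | untl  : BSLPath AP Ag Var → BSLPath AP Ag Var → BSLPath AP Ag Var
end

/-- Semantics of SL. Temporal operators are evaluated on an outcome play of the
current assignment (for complete assignments — the only case where the SL
semantics is defined — this play is unique), with the assignment translated
along the play. -/
def SLsat [DecidableEq S] [DecidableEq Ag] [DecidableEq Var] (G : CGS S Ag Act AP) :
    Assign S Ag Act Var → S → SLForm AP Ag Var → Prop
  | χ, q, .atom p => G.val q p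
  | χ, q, .neg φ => ¬ SLsat G χ q φ
  | χ, q, .or φ φ' => SLsat G χ q φ ∨ SLsat G χ q φ'
  | χ, q, .exi x φ =>
      ∃ σ : Strat S Ag Act, SLsat G (Function.update χ (Sum.inr x) (some σ)) q φ
  | χ, q, .bind a x φ => SLsat G (Function.update χ (Sum.inl a) (χ (Sum.inr x))) q φ
  | χ, q, .next φ => ∃ d ∈ outcome G q χ,
      SLsat G (transAssign G (prefixPath q d 1) χ) (stateAt G q d 1) φ
  | χ, q, .untl φ φ' => ∃ d ∈ outcome G q χ, ∃ j : ℕ,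
      SLsat G (transAssign G (prefixPath q d j) χ) (stateAt G q d j) φ' ∧
      ∀ k < j, SLsat G (transAssign G (prefixPath q d k) χ) (stateAt G q d k) φ

mutual
/-- Semantics of BSL state formulas, at a state under an assignment. -/
def BSLsat [DecidableEq S] [DecidableEq Ag] [DecidableEq Var] (G : CGS S Ag Act AP)
    (χ : Assign S Ag Act Var) (q : S) : BSLForm AP Ag Var → Prop
  | .atom p => G.val q p
  | .neg φ => ¬ BSLsat G χ q φ
  | .or φ φ' => BSLsat G χ q φ ∨ BSLsat G χ q φ'
  | .exi x φ =>
      ∃ σ : Strat S Ag Act, BSLsat G (Function.update χ (Sum.inr x) (some σ)) q φ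
  | .bind a x φ => BSLsat G (Function.update χ (Sum.inl a) (χ (Sum.inr x))) q φ
  | .unbind a φ => BSLsat G (Function.update χ (Sum.inl a) none) q φ
  | .pathE ψ => ∃ d ∈ outcome G q χ, BSLsatP G χ q d 0 ψ

/-- Semantics of BSL path formulas, on the play from `q` with decision stream
`d`, at position `i`; the assignment is translated by the prefix as state
formulas are evaluated. -/
def BSLsatP [DecidableEq S] [DecidableEq Ag] [DecidableEq Var] (G : CGS S Ag Act AP)
    (χ : Assign S Ag Act Var) (q : S) (d : ℕ → Ag → Act) (i : ℕ) :
    BSLPath AP Ag Var → Prop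
  | .state φ => BSLsat G (transAssign G (prefixPath q d i) χ) (stateAt G q d i) φ
  | .neg ψ => ¬ BSLsatP G χ q d i ψ
  | .or ψ ψ' => BSLsatP G χ q d i ψ ∨ BSLsatP G χ q d i ψ'
  | .next ψ => BSLsatP G χ q d (i + 1) ψ
  | .untl ψ ψ' => ∃ j, i ≤ j ∧ BSLsatP G χ q d j ψ' ∧
      ∀ k, i ≤ k → k < j → BSLsatP G χ q d k ψ
end

/-- Free variables of an SL formula. -/
def SLfree : SLForm AP Ag Var → Set Var
  | .atom _ => ∅
  | .neg φ => SLfree φ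
  | .or φ φ' => SLfree φ ∪ SLfree φ'
  | .next φ => SLfree φ
  | .untl φ φ' => SLfree φ ∪ SLfree φ'
  | .exi x φ => SLfree φ \ {x}
  | .bind _ x φ => insert x (SLfree φ)

mutual
/-- Free variables of a BSL state formula. -/
def BSLfree : BSLForm AP Ag Var → Set Var
  | .atom _ => ∅
  | .neg φ => BSLfree φ
  | .or φ φ' => BSLfree φ ∪ BSLfree φ'
  | .exi x φ => BSLfree φ \ {x}
  | .bind _ x φ => insert x (BSLfree φ)
  | .unbind _ φ => BSLfree φ
  | .pathE ψ => BSLfreeP ψ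
/-- Free variables of a BSL path formula. -/
def BSLfreeP : BSLPath AP Ag Var → Set Var
  | .state φ => BSLfree φ
  | .neg ψ => BSLfreeP ψ
  | .or ψ ψ' => BSLfreeP ψ ∪ BSLfreeP ψ'
  | .next ψ => BSLfreeP ψ
  | .untl ψ ψ' => BSLfreeP ψ ∪ BSLfreeP ψ'
end

/-- `SLdefFor A φ` holds when the SL semantics of `φ` is defined in every
assignment whose agent-domain is `A`: every temporal operator is only
evaluated under a complete assignment (every agent being bound on the way). -/
def SLdefFor (A : Set Ag) : SLForm AP Ag Var → Prop
  | .atom _ => True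
  | .neg φ => SLdefFor A φ
  | .or φ φ' => SLdefFor A φ ∧ SLdefFor A φ'
  | .exi _ φ => SLdefFor A φ
  | .bind a _ φ => SLdefFor (insert a A) φ
  | .next φ => A = Set.univ ∧ SLdefFor A φ
  | .untl φ φ' => A = Set.univ ∧ SLdefFor A φ ∧ SLdefFor A φ'

/-- The translation `tr : SL → BSL`, inserting a path quantifier in front of
each temporal operator and homomorphic elsewhere. -/
def tr : SLForm AP Ag Var → BSLForm AP Ag Var
  | .atom p => .atom p
  | .neg φ => .neg (tr φ)
  | .or φ φ' => .or (tr φ) (tr φ')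
  | .next φ => .pathE (.next (.state (tr φ)))
  | .untl φ φ' => .pathE (.untl (.state (tr φ)) (.state (tr φ')))
  | .exi x φ => .exi x (tr φ)
  | .bind a x φ => .bind a x (tr φ)

mutual
/-- `φ` avoids the fresh variables (those of the form `Sum.inr a`) used by the
translation `tr_A`. -/
def BSLavoidsFresh : BSLForm AP Ag (Var ⊕ Ag) → Prop
  | .atom _ => True
  | .neg φ => BSLavoidsFresh φ
  | .or φ φ' => BSLavoidsFresh φ ∧ BSLavoidsFresh φ'
  | .exi x φ => x.isLeft ∧ BSLavoidsFresh φ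
  | .bind _ x φ => x.isLeft ∧ BSLavoidsFresh φ
  | .unbind _ φ => BSLavoidsFresh φ
  | .pathE ψ => BSLavoidsFreshP ψ
def BSLavoidsFreshP : BSLPath AP Ag (Var ⊕ Ag) → Prop
  | .state φ => BSLavoidsFresh φ
  | .neg ψ => BSLavoidsFreshP ψ
  | .or ψ ψ' => BSLavoidsFreshP ψ ∧ BSLavoidsFreshP ψ'
  | .next ψ => BSLavoidsFreshP ψ
  | .untl ψ ψ' => BSLavoidsFreshP ψ ∧ BSLavoidsFreshP ψ'
end

/-- Prefix a formula with the bindings `(a, x_a)` for all agents `a` in `l`. -/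
def bindList (l : List Ag) (φ : SLForm AP Ag (Var ⊕ Ag)) : SLForm AP Ag (Var ⊕ Ag) :=
  l.foldr (fun a ψ => .bind a (Sum.inr a) ψ) φ

/-- Prefix a formula with the strategy quantifications `⟨⟨x_a⟩⟩` for `a ∈ l`. -/
def quantList (l : List Ag) (φ : SLForm AP Ag (Var ⊕ Ag)) : SLForm AP Ag (Var ⊕ Ag) :=
  l.foldr (fun a ψ => .exi (Sum.inr a) ψ) φ

noncomputable section

mutual
/-- The translation `tr_A : BSL → SL`, parameterized by the set `A` of
currently unbound agents; each fresh variable for agent `a` is `Sum.inr a`. -/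
def trA [DecidableEq Ag] (A : Finset Ag) :
    BSLForm AP Ag (Var ⊕ Ag) → SLForm AP Ag (Var ⊕ Ag)
  | .atom p => .atom p
  | .neg φ => .neg (trA A φ)
  | .or φ φ' => .or (trA A φ) (trA A φ')
  | .exi x φ => .exi x (trA A φ)
  | .bind a x φ => .bind a x (trA (A.erase a) φ)
  | .unbind a φ => trA (insert a A) φ
  | .pathE ψ => quantList A.toList (bindList A.toList (trAP A ψ))
/-- The homomorphic extension of `tr_A` to BSL path formulas. -/
def trAP [DecidableEq Ag] (A : Finset Ag) :
    BSLPath AP Ag (Var ⊕ Ag) → SLForm AP Ag (Var ⊕ Ag)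
  | .state φ => trA A φ
  | .neg ψ => .neg (trAP A ψ)
  | .or ψ ψ' => .or (trAP A ψ) (trAP A ψ')
  | .next ψ => .next (trAP A ψ)
  | .untl ψ ψ' => .untl (trAP A ψ) (trAP A ψ')
end
end

/-- The empty assignment. -/
def emptyAssign : Assign S Ag Act Var := fun _ => none

lemma prefixPath_zero (q : S) (d : ℕ → Ag → Act) : prefixPath q d 0 = (q, []) := rfl

lemma stateAt_zero (G : CGS S Ag Act AP) (q : S) (d : ℕ → Ag → Act) : stateAt G q d 0 = q :=
  rfl

lemma FPath.concat_assoc (ρ ρ' ρ'' : FPath S Ag Act) :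
    (ρ.concat ρ').concat ρ'' = ρ.concat (ρ'.concat ρ'') := by
  simp [FPath.concat]

lemma CGS.lastState_concat (G : CGS S Ag Act AP) {ρ ρ' : FPath S Ag Act}
    (h : ρ'.1 = G.lastState ρ) : G.lastState (ρ.concat ρ') = G.lastState ρ' := by
  simp only [CGS.lastState, FPath.concat, List.foldl_append, h]

lemma prefixPath_concat_shift (q q' : S) (d : ℕ → Ag → Act) (i j : ℕ) :
    (prefixPath q d i).concat (prefixPath q' (fun k => d (i + k)) j) = prefixPath q d (i + j) := by
  simp [prefixPath, FPath.concat, List.ofFn_add]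

lemma stateAt_shift (G : CGS S Ag Act AP) (q : S) (d : ℕ → Ag → Act) (i j : ℕ) :
    stateAt G (stateAt G q d i) (fun k => d (i + k)) j = stateAt G q d (i + j) := by
  rw [stateAt, ← G.lastState_concat rfl, prefixPath_concat_shift]
  rfl

section Translation

variable [DecidableEq S]

lemma transStrat_nil (G : CGS S Ag Act AP) (q : S) :
    transStrat G (q, ([] : List (Ag → Act))) = id := by
  funext σ ρ
  by_cases h : ρ.1 = q
  · simp [transStrat, CGS.lastState, FPath.concat, ← h]
  · simp [transStrat, CGS.lastState, h]

lemma transAssign_nil (G : CGS S Ag Act AP) (q : S) (χ : Assign S Ag Act Var) :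
    transAssign G (q, []) χ = χ := by
  funext l
  simp [transAssign, transStrat_nil]

@[simp]
lemma transAssign_isSome (G : CGS S Ag Act AP) (ρ : FPath S Ag Act) (χ : Assign S Ag Act Var)
    (l : Ag ⊕ Var) : (transAssign G ρ χ l).isSome = (χ l).isSome := by
  simp [transAssign]

end Translation

lemma Option.Rel.map {α β γ δ : Type*} {r : α → β → Prop} {s : γ → δ → Prop} {f : α → γ}
    {g : β → δ} {o : Option α} {o' : Option β} (h : Option.Rel r o o')
    (hfg : ∀ {a b}, r a b → s (f a) (g b)) : Option.Rel s (o.map f) (o'.map g) := by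
  cases h with
  | none => exact .none
  | some hab => exact .some (hfg hab)

lemma Option.Rel.swap {α β : Type*} {r : α → β → Prop} {s : β → α → Prop} {o : Option α}
    {o' : Option β} (h : Option.Rel r o o') (hrs : ∀ {a b}, r a b → s b a) :
    Option.Rel s o' o := by
  cases h with
  | none => exact .none
  | some hab => exact .some (hrs hab)

lemma Option.Rel.exists_of_right {α β : Type*} {r : α → β → Prop} {o : Option α} {b : β}
    (h : Option.Rel r o (Option.some b)) : ∃ a, o = Option.some a ∧ r a b := by
  cases h with
  | some hab => exact ⟨_, rfl, hab⟩

def StratEqFrom (q : S) (σ σ' : Strat S Ag Act) : Prop :=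
  ∀ ρ : FPath S Ag Act, ρ.1 = q → σ ρ = σ' ρ

/-- Strategies are only ever consulted on paths from the current state, so assignments that
agree there are interchangeable. -/
def AssignEqFrom (q : S) (χ χ' : Assign S Ag Act Var) : Prop :=
  ∀ l, Option.Rel (StratEqFrom q) (χ l) (χ' l)

lemma AssignEqFrom.refl (q : S) (χ : Assign S Ag Act Var) : AssignEqFrom q χ χ := by
  intro l
  cases χ l
  · exact .none
  · exact .some fun _ _ => rfl

lemma AssignEqFrom.update [DecidableEq Ag] [DecidableEq Var] {q : S}
    {χ χ' : Assign S Ag Act Var} (h : AssignEqFrom q χ χ')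
    (l : Ag ⊕ Var) {o o' : Option (Strat S Ag Act)} (ho : Option.Rel (StratEqFrom q) o o') :
    AssignEqFrom q (Function.update χ l o) (Function.update χ' l o') := by
  intro l'
  by_cases hl : l' = l
  · subst hl
    simpa using ho
  · simpa [Function.update_of_ne hl] using h l'

lemma AssignEqFrom.outcome_eq (G : CGS S Ag Act AP) {q : S} {χ χ' : Assign S Ag Act Var}
    (h : AssignEqFrom q χ χ') : outcome G q χ = outcome G q χ' := by
  have key : ∀ {χ χ' : Assign S Ag Act Var}, AssignEqFrom q χ χ' →
      outcome G q χ ⊆ outcome G q χ' := by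
    intro χ χ' h d hd k a σ' hσ'
    obtain ⟨σ, hσ, hσσ'⟩ := (hσ' ▸ h (.inl a)).exists_of_right
    rw [hd k a σ hσ, hσσ' _ rfl]
  exact (key h).antisymm (key fun l => (h l).swap fun hσ ρ hρ => (hσ ρ hρ).symm)

lemma AssignEqFrom.transAssign [DecidableEq S] (G : CGS S Ag Act AP) (ρ : FPath S Ag Act)
    {χ χ' : Assign S Ag Act Var} (h : AssignEqFrom ρ.1 χ χ') :
    AssignEqFrom (G.lastState ρ) (transAssign G ρ χ) (transAssign G ρ χ') := by
  refine fun l => (h l).map fun hσ ρ' hρ' => ?_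
  simp only [transStrat, if_pos hρ']
  exact hσ _ rfl

lemma SLsat_congr [DecidableEq S] [DecidableEq Ag] [DecidableEq Var] (G : CGS S Ag Act AP)
    (φ : SLForm AP Ag Var) {q : S} {χ χ' : Assign S Ag Act Var} (h : AssignEqFrom q χ χ') :
    SLsat G χ q φ ↔ SLsat G χ' q φ := by
  induction φ generalizing q χ χ' with
  | atom p => rfl
  | neg φ ih => simp only [SLsat, ih h]
  | or φ φ' ih ih' => simp only [SLsat, ih h, ih' h]
  | exi x φ ih =>
    exact exists_congr fun σ => ih (h.update _ (.some fun _ _ => rfl))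
  | bind a x φ ih => exact ih (h.update _ (h (.inr x)))
  | next φ ih =>
    simp only [SLsat, h.outcome_eq G]
    exact exists_congr fun d => and_congr_right fun _ => ih (h.transAssign G (prefixPath q d 1))
  | untl φ φ' ih ih' =>
    simp only [SLsat, h.outcome_eq G]
    exact exists_congr fun d => and_congr_right fun _ => exists_congr fun j =>
      and_congr (ih' (h.transAssign G (prefixPath q d j)))
        (forall₂_congr fun k _ => ih (h.transAssign G (prefixPath q d k)))

lemma transAssign_transAssign [DecidableEq S] (G : CGS S Ag Act AP) {ρ ρ' : FPath S Ag Act}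
    (hρ' : ρ'.1 = G.lastState ρ) (χ : Assign S Ag Act Var) :
    AssignEqFrom (G.lastState ρ') (transAssign G ρ' (transAssign G ρ χ))
      (transAssign G (ρ.concat ρ') χ) := by
  intro l
  simp only [transAssign, Option.map_map]
  refine (AssignEqFrom.refl ρ.1 χ l).map fun {σ σ'} hσ ρ'' hρ'' => ?_
  have hρ''' : ρ''.1 = G.lastState (ρ.concat ρ') := by rw [G.lastState_concat hρ', hρ'']
  simp only [Function.comp_apply, transStrat, if_pos hρ'', if_pos hρ''', FPath.concat_assoc]
  rw [if_pos (show (ρ'.concat ρ'').1 = G.lastState ρ from hρ')]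
  exact hσ _ rfl

lemma SLsat_transAssign_shift [DecidableEq S] [DecidableEq Ag] [DecidableEq Var]
    (G : CGS S Ag Act AP) (θ : SLForm AP Ag Var) (χ : Assign S Ag Act Var) (q : S)
    (d : ℕ → Ag → Act) (i j : ℕ) :
    SLsat G (transAssign G (prefixPath (stateAt G q d i) (fun k => d (i + k)) j)
        (transAssign G (prefixPath q d i) χ)) (stateAt G (stateAt G q d i) (fun k => d (i + k)) j) θ
      ↔ SLsat G (transAssign G (prefixPath q d (i + j)) χ) (stateAt G q d (i + j)) θ := by
  have h := transAssign_transAssign G (ρ := prefixPath q d i)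
    (ρ' := prefixPath (stateAt G q d i) (fun k => d (i + k)) j) rfl χ
  rw [prefixPath_concat_shift] at h
  rw [← stateAt_shift]
  exact SLsat_congr G θ h

section Outcomes

def Assign.IsComplete (χ : Assign S Ag Act Var) : Prop :=
  ∀ a, (χ (.inl a)).isSome

lemma outcome_shift [DecidableEq S] (G : CGS S Ag Act AP) {q : S} {χ : Assign S Ag Act Var}
    {d : ℕ → Ag → Act} (hd : d ∈ outcome G q χ) (i : ℕ) :
    (fun k => d (i + k)) ∈ outcome G (stateAt G q d i) (transAssign G (prefixPath q d i) χ) := by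
  intro k a σ hσ
  obtain ⟨σ₀, hσ₀, rfl⟩ := Option.map_eq_some_iff.1 hσ
  have hstart : (prefixPath (stateAt G q d i) (fun k => d (i + k)) k).1
      = G.lastState (prefixPath q d i) := rfl
  rw [transStrat, if_pos hstart, prefixPath_concat_shift]
  exact hd (i + k) a σ₀ hσ₀

lemma eq_of_mem_outcome (G : CGS S Ag Act AP) {q : S} {χ : Assign S Ag Act Var}
    (hχ : χ.IsComplete) {d d' : ℕ → Ag → Act} (hd : d ∈ outcome G q χ)
    (hd' : d' ∈ outcome G q χ) : d = d' := by
  funext k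
  induction k using Nat.strong_induction_on with
  | _ k ih =>
    have hprefix : prefixPath (Ag := Ag) (Act := Act) q d k = prefixPath q d' k := by
      simp only [prefixPath, Prod.mk.injEq, true_and]
      exact congrArg List.ofFn (funext fun i => ih i i.2)
    funext a
    obtain ⟨σ, hσ⟩ := Option.isSome_iff_exists.1 (hχ a)
    rw [hd k a σ hσ, hd' k a σ hσ, hprefix]

def playPrefix (q : S) (σ : Ag → Strat S Ag Act) : ℕ → List (Ag → Act)
  | 0 => []
  | n + 1 => playPrefix q σ n ++ [fun a => σ a (q, playPrefix q σ n)]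

def playOf (q : S) (σ : Ag → Strat S Ag Act) (k : ℕ) : Ag → Act :=
  fun a => σ a (q, playPrefix q σ k)

lemma prefixPath_playOf (q : S) (σ : Ag → Strat S Ag Act) (k : ℕ) :
    prefixPath q (playOf q σ) k = (q, playPrefix q σ k) := by
  induction k with
  | zero => rfl
  | succ k ih =>
    simp only [prefixPath, Prod.mk.injEq, true_and] at ih ⊢
    simp only [List.ofFn_succ_last, Fin.val_castSucc, ih, Fin.val_last]
    rfl

lemma outcome_nonempty (G : CGS S Ag Act AP) (q : S) {χ : Assign S Ag Act Var}
    (hχ : χ.IsComplete) : (outcome G q χ).Nonempty := by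
  choose σ hσ using fun a => Option.isSome_iff_exists.1 (hχ a)
  refine ⟨playOf q σ, fun k a σ' hσ' => ?_⟩
  rw [prefixPath_playOf, ← Option.some_injective _ ((hσ a).symm.trans hσ')]
  rfl

lemma exists_mem_outcome_shift_iff [DecidableEq S] (G : CGS S Ag Act AP) {q : S}
    {χ : Assign S Ag Act Var} (hχ : χ.IsComplete) {d : ℕ → Ag → Act} (hd : d ∈ outcome G q χ)
    (i : ℕ) (P : (ℕ → Ag → Act) → Prop) :
    (∃ d' ∈ outcome G (stateAt G q d i) (transAssign G (prefixPath q d i) χ), P d') ↔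
      P (fun k => d (i + k)) := by
  have hmem := outcome_shift G hd i
  refine ⟨fun ⟨d', hd', hP⟩ => ?_, fun hP => ⟨_, hmem, hP⟩⟩
  rwa [eq_of_mem_outcome G (fun a => by simpa using hχ a) hd' hmem] at hP

variable [DecidableEq S] [DecidableEq Ag] [DecidableEq Var]

lemma SLsat_next_iff_of_isComplete (G : CGS S Ag Act AP) {q : S} {χ : Assign S Ag Act Var}
    (hχ : χ.IsComplete) {d : ℕ → Ag → Act} (hd : d ∈ outcome G q χ) (i : ℕ)
    (θ : SLForm AP Ag Var) :
    SLsat G (transAssign G (prefixPath q d i) χ) (stateAt G q d i) (.next θ) ↔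
      SLsat G (transAssign G (prefixPath q d (i + 1)) χ) (stateAt G q d (i + 1)) θ := by
  rw [SLsat, exists_mem_outcome_shift_iff G hχ hd, SLsat_transAssign_shift]

lemma SLsat_untl_iff_of_isComplete (G : CGS S Ag Act AP) {q : S} {χ : Assign S Ag Act Var}
    (hχ : χ.IsComplete) {d : ℕ → Ag → Act} (hd : d ∈ outcome G q χ) (i : ℕ)
    (θ θ' : SLForm AP Ag Var) :
    SLsat G (transAssign G (prefixPath q d i) χ) (stateAt G q d i) (.untl θ θ') ↔
      ∃ j, i ≤ j ∧ SLsat G (transAssign G (prefixPath q d j) χ) (stateAt G q d j) θ' ∧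
        ∀ k, i ≤ k → k < j →
          SLsat G (transAssign G (prefixPath q d k) χ) (stateAt G q d k) θ := by
  simp only [SLsat, exists_mem_outcome_shift_iff G hχ hd, SLsat_transAssign_shift]
  constructor
  · rintro ⟨j, hj, hbefore⟩
    refine ⟨i + j, by omega, hj, fun k hik hkj => ?_⟩
    simpa [Nat.add_sub_cancel' hik] using hbefore (k - i) (by omega)
  · rintro ⟨j, hij, hj, hbefore⟩
    refine ⟨j - i, by rwa [Nat.add_sub_cancel' hij], fun k hk => hbefore _ (by omega) (by omega)⟩

end Outcomes

lemma SLsat_iff_BSLsat_tr [DecidableEq S] [DecidableEq Ag] [DecidableEq Var]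
    (G : CGS S Ag Act AP) (φ : SLForm AP Ag Var) (χ : Assign S Ag Act Var) (q : S) :
    SLsat G χ q φ ↔ BSLsat G χ q (tr φ) := by
  induction φ generalizing χ q with
  | atom p => rfl
  | neg φ ih => simp only [SLsat, tr, BSLsat, ih]
  | or φ φ' ih ih' => simp only [SLsat, tr, BSLsat, ih, ih']
  | exi x φ ih => simp only [SLsat, tr, BSLsat, ih]
  | bind a x φ ih => simp only [SLsat, tr, BSLsat, ih]
  | next φ ih => simp only [SLsat, tr, BSLsat, BSLsatP, ih]
  | untl φ φ' ih ih' =>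
    simp only [SLsat, tr, BSLsat, BSLsatP, ih, ih', zero_le, true_and, forall_const]

lemma BSLfree_tr (φ : SLForm AP Ag Var) : BSLfree (tr φ) = SLfree φ := by
  induction φ <;> simp_all [tr, BSLfree, BSLfreeP, SLfree]

section FreshVariables

def FreshVariant (l : List Ag) (χ χ' : Assign S Ag Act (Var ⊕ Ag)) : Prop :=
  (∀ x, (∀ a ∈ l, x ≠ .inr (.inr a)) → χ' x = χ x) ∧ ∀ a ∈ l, (χ' (.inr (.inr a))).isSome

variable [DecidableEq Ag]

lemma freshVariant_cons_iff [DecidableEq Var] {a : Ag} {l : List Ag}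
    {χ χ' : Assign S Ag Act (Var ⊕ Ag)} :
    FreshVariant (a :: l) χ χ' ↔
      ∃ σ, FreshVariant l (Function.update χ (.inr (.inr a)) (some σ)) χ' := by
  constructor
  · rintro ⟨hoff, hon⟩
    refine ⟨(χ' (.inr (.inr a))).get (hon a List.mem_cons_self), fun x hx => ?_,
      fun b hb => hon b (List.mem_cons_of_mem a hb)⟩
    by_cases hxa : x = .inr (.inr a)
    · simp [hxa]
    · rw [Function.update_of_ne hxa]
      exact hoff x (List.forall_mem_cons.2 ⟨hxa, hx⟩)
  · rintro ⟨σ, hoff, hon⟩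
    refine ⟨fun x hx => ?_, List.forall_mem_cons.2 ⟨?_, hon⟩⟩
    · rw [hoff x fun b hb => hx b (List.mem_cons_of_mem a hb),
        Function.update_of_ne (hx a List.mem_cons_self)]
    · by_cases ha : a ∈ l
      · exact hon a ha
      · rw [hoff _ fun b hb hab => ha (by simp_all)]
        simp

lemma SLsat_quantList_iff [DecidableEq S] [DecidableEq Var] (G : CGS S Ag Act AP) (q : S)
    (l : List Ag) (θ : SLForm AP Ag (Var ⊕ Ag)) (χ : Assign S Ag Act (Var ⊕ Ag)) :
    SLsat G χ q (quantList l θ) ↔ ∃ χ', FreshVariant l χ χ' ∧ SLsat G χ' q θ := by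
  induction l generalizing χ with
  | nil =>
    refine ⟨fun h => ⟨χ, ⟨fun _ _ => rfl, by simp⟩, h⟩, fun ⟨χ', ⟨hoff, _⟩, h⟩ => ?_⟩
    rwa [funext fun x => hoff x (by simp)] at h
  | cons a l ih =>
    simp only [quantList, List.foldr_cons, SLsat, freshVariant_cons_iff] at ih ⊢
    simp only [ih, ← exists_and_right]
    exact exists_comm

def bindFresh (l : List Ag) (χ : Assign S Ag Act (Var ⊕ Ag)) : Assign S Ag Act (Var ⊕ Ag)
  | .inl a => if a ∈ l then χ (.inr (.inr a)) else χ (.inl a)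
  | x => χ x

lemma SLsat_bindList_iff [DecidableEq S] [DecidableEq Var] (G : CGS S Ag Act AP) (q : S)
    (l : List Ag) (θ : SLForm AP Ag (Var ⊕ Ag)) (χ : Assign S Ag Act (Var ⊕ Ag)) :
    SLsat G χ q (bindList l θ) ↔ SLsat G (bindFresh l χ) q θ := by
  induction l generalizing χ with
  | nil =>
    rw [show bindFresh [] χ = χ by funext x; rcases x with a | x <;> rfl]
    rfl
  | cons a l ih =>
    refine (ih _).trans (iff_of_eq (congrArg (SLsat G · q θ) (funext fun x => ?_)))
    rcases x with b | x
    · by_cases hba : b = a <;> by_cases hb : b ∈ l <;> simp [bindFresh, hba, hb]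
    · simp [bindFresh]

def withFresh (A : Finset Ag) (f : Ag → Strat S Ag Act) (χ : Assign S Ag Act (Var ⊕ Ag)) :
    Assign S Ag Act (Var ⊕ Ag)
  | .inr (.inr a) => if a ∈ A then some (f a) else χ (.inr (.inr a))
  | x => χ x

lemma freshVariant_withFresh (A : Finset Ag) (f : Ag → Strat S Ag Act)
    (χ : Assign S Ag Act (Var ⊕ Ag)) : FreshVariant A.toList χ (withFresh A f χ) := by
  refine ⟨fun x hx => ?_, fun a ha => by simp_all [withFresh]⟩
  rcases x with b | v | b
  · rfl
  · rfl
  · simp_all [withFresh]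

end FreshVariables

lemma SLfree_quantList (l : List Ag) (θ : SLForm AP Ag (Var ⊕ Ag)) :
    SLfree (quantList l θ) = SLfree θ \ Sum.inr '' {a | a ∈ l} := by
  induction l with
  | nil => simp [quantList]
  | cons a l ih =>
    simp only [quantList, List.foldr_cons] at ih ⊢
    ext x
    simp only [SLfree, ih, List.mem_cons]
    aesop

lemma SLfree_bindList (l : List Ag) (θ : SLForm AP Ag (Var ⊕ Ag)) :
    SLfree (bindList l θ) = SLfree θ ∪ Sum.inr '' {a | a ∈ l} := by
  induction l with
  | nil => simp [bindList]
  | cons a l ih =>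
    simp only [bindList, List.foldr_cons] at ih ⊢
    ext x
    simp only [SLfree, ih, List.mem_cons]
    aesop

mutual

lemma SLfree_trA [DecidableEq Ag] (A : Finset Ag) (φ : BSLForm AP Ag (Var ⊕ Ag)) :
    SLfree (trA A φ) ⊆ BSLfree φ := by
  cases φ with
  | atom p => exact Set.empty_subset _
  | neg φ => exact SLfree_trA A φ
  | or φ φ' => exact Set.union_subset_union (SLfree_trA A φ) (SLfree_trA A φ')
  | exi x φ => exact Set.sdiff_subset_sdiff_left (SLfree_trA A φ)
  | bind a x φ => exact Set.insert_subset_insert (SLfree_trA (A.erase a) φ)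
  | unbind a φ => exact SLfree_trA (insert a A) φ
  | pathE ψ =>
    simp only [trA, SLfree_quantList, SLfree_bindList, BSLfree, Finset.mem_toList]
    rw [Set.union_sdiff_right, Set.sdiff_subset_iff, Set.union_comm]
    exact SLfree_trAP A ψ

lemma SLfree_trAP [DecidableEq Ag] (A : Finset Ag) (ψ : BSLPath AP Ag (Var ⊕ Ag)) :
    SLfree (trAP A ψ) ⊆ BSLfreeP ψ ∪ Sum.inr '' A := by
  cases ψ with
  | state φ => exact (SLfree_trA A φ).trans Set.subset_union_left
  | neg ψ => exact SLfree_trAP A ψ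
  | or ψ ψ' =>
    exact Set.union_subset
      ((SLfree_trAP A ψ).trans (Set.union_subset_union_left _ Set.subset_union_left))
      ((SLfree_trAP A ψ').trans (Set.union_subset_union_left _ Set.subset_union_right))
  | next ψ => exact SLfree_trAP A ψ
  | untl ψ ψ' =>
    exact Set.union_subset
      ((SLfree_trAP A ψ).trans (Set.union_subset_union_left _ Set.subset_union_left))
      ((SLfree_trAP A ψ').trans (Set.union_subset_union_left _ Set.subset_union_right))

end

lemma SLdefFor_quantList (B : Set Ag) (l : List Ag) (θ : SLForm AP Ag (Var ⊕ Ag)) :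
    SLdefFor B (quantList l θ) ↔ SLdefFor B θ := by
  induction l with
  | nil => rfl
  | cons a l ih => exact ih

lemma SLdefFor_bindList (B : Set Ag) (l : List Ag) (θ : SLForm AP Ag (Var ⊕ Ag)) :
    SLdefFor B (bindList l θ) ↔ SLdefFor (B ∪ {a | a ∈ l}) θ := by
  induction l generalizing B with
  | nil => simp [bindList]
  | cons a l ih =>
    refine (ih (insert a B)).trans (iff_of_eq (congrArg (SLdefFor · θ) ?_))
    ext x
    simp only [Set.mem_union, Set.mem_insert_iff, Set.mem_ofPred_eq, List.mem_cons]
    tauto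

mutual

lemma SLdefFor_trA [DecidableEq Ag] (A : Finset Ag) (φ : BSLForm AP Ag (Var ⊕ Ag)) {B : Set Ag}
    (hB : (↑A : Set Ag)ᶜ ⊆ B) : SLdefFor B (trA A φ) := by
  cases φ with
  | atom p => trivial
  | neg φ => exact SLdefFor_trA A φ hB
  | or φ φ' => exact ⟨SLdefFor_trA A φ hB, SLdefFor_trA A φ' hB⟩
  | exi x φ => exact SLdefFor_trA A φ hB
  | bind a x φ =>
    refine SLdefFor_trA (A.erase a) φ fun b hb => ?_
    by_cases hba : b = a
    · exact .inl hba
    · exact .inr (hB fun hbA => hb (Finset.mem_erase.2 ⟨hba, hbA⟩))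
  | unbind a φ =>
    exact SLdefFor_trA (insert a A) φ fun b hb => hB fun hbA => hb (Finset.mem_insert_of_mem hbA)
  | pathE ψ =>
    simp only [trA, SLdefFor_quantList, SLdefFor_bindList, Finset.mem_toList]
    rw [Set.union_comm, show {a | a ∈ A} ∪ B = Set.univ from Set.compl_subset_iff_union.1 hB]
    exact SLdefFor_trAP A ψ

lemma SLdefFor_trAP [DecidableEq Ag] (A : Finset Ag) (ψ : BSLPath AP Ag (Var ⊕ Ag)) :
    SLdefFor Set.univ (trAP A ψ) := by
  cases ψ with
  | state φ => exact SLdefFor_trA A φ (Set.subset_univ _)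
  | neg ψ => exact SLdefFor_trAP A ψ
  | or ψ ψ' => exact ⟨SLdefFor_trAP A ψ, SLdefFor_trAP A ψ'⟩
  | next ψ => exact ⟨rfl, SLdefFor_trAP A ψ⟩
  | untl ψ ψ' => exact ⟨rfl, SLdefFor_trAP A ψ, SLdefFor_trAP A ψ'⟩

end

section BSLToSL

/-- The invariant of `tr_A`: `χ₁` is the BSL assignment and `χ₂` the SL one. The agents of `A`
are unbound in BSL; in SL they keep stale bindings until the next path quantifier rebinds them
through fresh variables. -/
structure TrARel (A : Finset Ag) (χ₁ χ₂ : Assign S Ag Act (Var ⊕ Ag)) : Prop where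
  unbound : ∀ a ∈ A, χ₁ (.inl a) = none
  bound : ∀ a ∉ A, (χ₁ (.inl a)).isSome
  agent_eq : ∀ a ∉ A, χ₂ (.inl a) = χ₁ (.inl a)
  var_eq : ∀ v : Var, χ₂ (.inr (.inl v)) = χ₁ (.inr (.inl v))

namespace TrARel

variable {A : Finset Ag} {χ₁ χ₂ : Assign S Ag Act (Var ⊕ Ag)}

lemma update_var [DecidableEq Ag] [DecidableEq Var] (h : TrARel A χ₁ χ₂) (v : Var)
    (o : Option (Strat S Ag Act)) :
    TrARel A (Function.update χ₁ (.inr (.inl v)) o) (Function.update χ₂ (.inr (.inl v)) o) where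
  unbound a ha := by simpa using h.unbound a ha
  bound a ha := by simpa using h.bound a ha
  agent_eq a ha := by simpa using h.agent_eq a ha
  var_eq w := by by_cases hw : w = v <;> simp [hw, h.var_eq w]

lemma bind [DecidableEq Ag] [DecidableEq Var] (h : TrARel A χ₁ χ₂) (a : Ag) (v : Var)
    (hv : (χ₁ (.inr (.inl v))).isSome) :
    TrARel (A.erase a) (Function.update χ₁ (.inl a) (χ₁ (.inr (.inl v))))
      (Function.update χ₂ (.inl a) (χ₂ (.inr (.inl v)))) where
  unbound b hb := by
    rw [Finset.mem_erase] at hb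
    simpa [hb.1] using h.unbound b hb.2
  bound b hb := by
    by_cases hba : b = a
    · simpa [hba] using hv
    · simpa [hba] using h.bound b fun hbA => hb (Finset.mem_erase.2 ⟨hba, hbA⟩)
  agent_eq b hb := by
    by_cases hba : b = a
    · simp [hba, h.var_eq v]
    · simpa [hba] using h.agent_eq b fun hbA => hb (Finset.mem_erase.2 ⟨hba, hbA⟩)
  var_eq w := by simpa using h.var_eq w

lemma unbind [DecidableEq Ag] [DecidableEq Var] (h : TrARel A χ₁ χ₂) (a : Ag) :
    TrARel (insert a A) (Function.update χ₁ (.inl a) none) χ₂ where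
  unbound b hb := by
    by_cases hba : b = a
    · simp [hba]
    · simpa [hba] using h.unbound b (by simpa [hba] using hb)
  bound b hb := by
    have hba : b ≠ a := fun hba => hb (hba ▸ Finset.mem_insert_self a A)
    simpa [hba] using h.bound b fun hbA => hb (Finset.mem_insert_of_mem hbA)
  agent_eq b hb := by
    have hba : b ≠ a := fun hba => hb (hba ▸ Finset.mem_insert_self a A)
    simpa [hba] using h.agent_eq b fun hbA => hb (Finset.mem_insert_of_mem hbA)
  var_eq w := by simpa using h.var_eq w

lemma transAssign [DecidableEq S] (G : CGS S Ag Act AP) (ρ : FPath S Ag Act)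
    (h : TrARel A χ₁ χ₂) : TrARel A (transAssign G ρ χ₁) (transAssign G ρ χ₂) where
  unbound a ha := by simp [_root_.transAssign, h.unbound a ha]
  bound a ha := by simpa using h.bound a ha
  agent_eq a ha := by simp [_root_.transAssign, h.agent_eq a ha]
  var_eq v := by simp [_root_.transAssign, h.var_eq v]

lemma bindFresh [DecidableEq Ag] {χ' : Assign S Ag Act (Var ⊕ Ag)} (h : TrARel A χ₁ χ₂)
    (hχ' : FreshVariant A.toList χ₂ χ') : TrARel A χ₁ (bindFresh A.toList χ') where
  unbound := h.unbound
  bound := h.bound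
  agent_eq a ha := by
    simp only [_root_.bindFresh, Finset.mem_toList, if_neg ha]
    rw [hχ'.1 _ (by simp), h.agent_eq a ha]
  var_eq v := by
    simp only [_root_.bindFresh]
    rw [hχ'.1 _ (by simp), h.var_eq v]

lemma isComplete_bindFresh [DecidableEq Ag] {χ' : Assign S Ag Act (Var ⊕ Ag)}
    (h : TrARel A χ₁ χ₂) (hχ' : FreshVariant A.toList χ₂ χ') :
    (_root_.bindFresh A.toList χ').IsComplete := by
  intro a
  by_cases ha : a ∈ A
  · simpa [_root_.bindFresh, ha] using hχ'.2 a (Finset.mem_toList.2 ha)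
  · rw [(h.bindFresh hχ').agent_eq a ha]
    exact h.bound a ha

lemma outcome_subset (G : CGS S Ag Act AP) (q : S) (h : TrARel A χ₁ χ₂) :
    outcome G q χ₂ ⊆ outcome G q χ₁ := by
  intro d hd k a σ hσ
  have ha : a ∉ A := fun ha => by simp [h.unbound a ha] at hσ
  exact hd k a σ (by rw [h.agent_eq a ha, hσ])

end TrARel

variable [DecidableEq S] [DecidableEq Ag] [DecidableEq Var]

lemma BSLsat_pathE_iff (G : CGS S Ag Act AP) {A : Finset Ag} {χ₁ χ₂ : Assign S Ag Act (Var ⊕ Ag)}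
    (h : TrARel A χ₁ χ₂) (q : S) (ψ : BSLPath AP Ag (Var ⊕ Ag)) (θ : SLForm AP Ag (Var ⊕ Ag))
    (hψ : ∀ χ₃, TrARel A χ₁ χ₃ → χ₃.IsComplete → ∀ d ∈ outcome G q χ₃,
      (BSLsatP G χ₁ q d 0 ψ ↔ SLsat G χ₃ q θ)) :
    BSLsat G χ₁ q (.pathE ψ) ↔ SLsat G χ₂ q (quantList A.toList (bindList A.toList θ)) := by
  simp only [BSLsat, SLsat_quantList_iff, SLsat_bindList_iff]
  constructor
  · rintro ⟨d, hd, hψd⟩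
    -- the agents of `A` get the strategies that replay `d`
    have hχ' := freshVariant_withFresh A (fun a ρ => d ρ.2.length a) χ₂
    have hd' :
        d ∈ outcome G q (bindFresh A.toList (withFresh A (fun a ρ => d ρ.2.length a) χ₂)) := by
      intro k a σ hσ
      by_cases ha : a ∈ A
      · simp only [bindFresh, withFresh, Finset.mem_toList, ha, if_true, Option.some.injEq] at hσ
        simp [← hσ, prefixPath]
      · rw [(h.bindFresh hχ').agent_eq a ha] at hσ
        exact hd k a σ hσ
    exact ⟨_, hχ', (hψ _ (h.bindFresh hχ') (h.isComplete_bindFresh hχ') d hd').1 hψd⟩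
  · rintro ⟨χ', hχ', hsat⟩
    have hC := h.isComplete_bindFresh hχ'
    obtain ⟨d, hd⟩ := outcome_nonempty G q hC
    exact ⟨d, (h.bindFresh hχ').outcome_subset G q hd, (hψ _ (h.bindFresh hχ') hC d hd).2 hsat⟩

mutual

theorem BSLsat_iff_SLsat_trA (G : CGS S Ag Act AP) (φ : BSLForm AP Ag (Var ⊕ Ag))
    (hφ : BSLavoidsFresh φ) {A : Finset Ag} {χ₁ χ₂ : Assign S Ag Act (Var ⊕ Ag)}
    (h : TrARel A χ₁ χ₂) (hfree : ∀ v, .inl v ∈ BSLfree φ → (χ₁ (.inr (.inl v))).isSome)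
    (q : S) : BSLsat G χ₁ q φ ↔ SLsat G χ₂ q (trA A φ) := by
  cases φ with
  | atom p => rfl
  | neg φ => exact not_congr (BSLsat_iff_SLsat_trA G φ hφ h hfree q)
  | or φ φ' =>
    exact or_congr (BSLsat_iff_SLsat_trA G φ hφ.1 h (fun v hv => hfree v (.inl hv)) q)
      (BSLsat_iff_SLsat_trA G φ' hφ.2 h (fun v hv => hfree v (.inr hv)) q)
  | exi x φ =>
    obtain ⟨v, rfl⟩ := Sum.isLeft_iff.1 hφ.1
    refine exists_congr fun σ => BSLsat_iff_SLsat_trA G φ hφ.2 (h.update_var v (some σ)) ?_ q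
    intro w hw
    by_cases hwv : w = v
    · simp [hwv]
    · simpa [hwv] using hfree w ⟨hw, by simpa using hwv⟩
  | bind a x φ =>
    obtain ⟨v, rfl⟩ := Sum.isLeft_iff.1 hφ.1
    exact BSLsat_iff_SLsat_trA G φ hφ.2 (h.bind a v (hfree v (Set.mem_insert _ _)))
      (fun w hw => by simpa using hfree w (Set.mem_insert_of_mem _ hw)) q
  | unbind a φ =>
    exact BSLsat_iff_SLsat_trA G φ hφ (h.unbind a) (fun w hw => by simpa using hfree w hw) q
  | pathE ψ =>
    refine BSLsat_pathE_iff G h q ψ _ fun χ₃ h₃ hC d hd => ?_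
    simpa [prefixPath_zero, transAssign_nil, stateAt_zero] using
      BSLsatP_iff_SLsat_trAP G ψ hφ h₃ hC hfree q hd 0

theorem BSLsatP_iff_SLsat_trAP (G : CGS S Ag Act AP) (ψ : BSLPath AP Ag (Var ⊕ Ag))
    (hψ : BSLavoidsFreshP ψ) {A : Finset Ag} {χ₁ χ₂ : Assign S Ag Act (Var ⊕ Ag)}
    (h : TrARel A χ₁ χ₂) (hχ₂ : χ₂.IsComplete)
    (hfree : ∀ v, .inl v ∈ BSLfreeP ψ → (χ₁ (.inr (.inl v))).isSome)
    (q : S) {d : ℕ → Ag → Act} (hd : d ∈ outcome G q χ₂) (i : ℕ) :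
    BSLsatP G χ₁ q d i ψ ↔
      SLsat G (transAssign G (prefixPath q d i) χ₂) (stateAt G q d i) (trAP A ψ) := by
  cases ψ with
  | state φ =>
    exact BSLsat_iff_SLsat_trA G φ hψ (h.transAssign G _) (fun v hv => by simpa using hfree v hv) _
  | neg ψ => exact not_congr (BSLsatP_iff_SLsat_trAP G ψ hψ h hχ₂ hfree q hd i)
  | or ψ ψ' =>
    exact or_congr (BSLsatP_iff_SLsat_trAP G ψ hψ.1 h hχ₂ (fun v hv => hfree v (.inl hv)) q hd i)
      (BSLsatP_iff_SLsat_trAP G ψ' hψ.2 h hχ₂ (fun v hv => hfree v (.inr hv)) q hd i)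
  | next ψ =>
    exact (BSLsatP_iff_SLsat_trAP G ψ hψ h hχ₂ hfree q hd (i + 1)).trans
      (SLsat_next_iff_of_isComplete G hχ₂ hd i _).symm
  | untl ψ ψ' =>
    have ih j := BSLsatP_iff_SLsat_trAP G ψ hψ.1 h hχ₂ (fun v hv => hfree v (.inl hv)) q hd j
    have ih' j := BSLsatP_iff_SLsat_trAP G ψ' hψ.2 h hχ₂ (fun v hv => hfree v (.inr hv)) q hd j
    refine .trans ?_ (SLsat_untl_iff_of_isComplete G hχ₂ hd i _ _).symm
    simp only [BSLsatP, ih, ih']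

end

end BSLToSL

/-- SL and BSL are equiexpressive. For every SL sentence there is
an equivalent BSL sentence (namely `tr(φ)`), and for every BSL sentence there
is an equivalent SL sentence (namely `tr_Ag(φ)`); `G ⊨ φ` is evaluated at the
initial state under the empty assignment (irrelevant for sentences). -/
theorem statement_8 [DecidableEq S] [DecidableEq Ag] [DecidableEq Var] [Fintype Ag] :
    (∀ φ : SLForm AP Ag Var, SLfree φ = ∅ → SLdefFor (∅ : Set Ag) φ →
      ∃ φ' : BSLForm AP Ag Var, BSLfree φ' = ∅ ∧
        ∀ G : CGS S Ag Act AP,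
          (SLsat G (emptyAssign (Var := Var)) G.init φ ↔
            BSLsat G (emptyAssign (Var := Var)) G.init φ')) ∧
    (∀ φ : BSLForm AP Ag (Var ⊕ Ag), BSLfree φ = ∅ → BSLavoidsFresh φ →
      ∃ φ' : SLForm AP Ag (Var ⊕ Ag),
        SLfree φ' = ∅ ∧ SLdefFor (∅ : Set Ag) φ' ∧
        ∀ G : CGS S Ag Act AP,
          (BSLsat G (emptyAssign (Var := Var ⊕ Ag)) G.init φ ↔
            SLsat G (emptyAssign (Var := Var ⊕ Ag)) G.init φ')) := by
  refine ⟨fun φ hfree _ => ⟨tr φ, by rw [BSLfree_tr, hfree], fun G => SLsat_iff_BSLsat_tr G φ _ _⟩,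
    fun φ hfree hφ => ⟨trA Finset.univ φ, ?_, SLdefFor_trA _ φ (by simp), fun G => ?_⟩⟩
  · exact Set.subset_empty_iff.1 (hfree ▸ SLfree_trA Finset.univ φ)
  · have h : TrARel (S := S) (Act := Act) Finset.univ (emptyAssign (Var := Var ⊕ Ag)) emptyAssign :=
      ⟨fun _ _ => rfl, fun a ha => absurd (Finset.mem_univ a) ha,
        fun a ha => absurd (Finset.mem_univ a) ha, fun _ => rfl⟩
    exact BSLsat_iff_SLsat_trA G φ hφ h (fun v hv => by simp [hfree] at hv) G.init
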